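/- Let $D_n = \hat{M}_n - M_n$ as above with $n\geq 2$. Then $\mathrm{Var}(D_n) \leq \frac{1}{n^2}\mathbb{E}[K_{n,1}] + \frac{2}{n(n-1)}\mathbb{E}[K_{n,2}]$. -/

import Mathlib

/-!
Almost surely `D_n = ∑ⱼ Yⱼ` with `Yⱼ = 𝟙{X_{n,j} = 1}/n - pⱼ 𝟙{X_{n,j} = 0}`, and the `Yⱼ` are
independent. Hence `Var(Yⱼ) ≤ 𝔼[Yⱼ²] = P(X_{n,j} = 1)/n² + pⱼ²(1 - pⱼ)ⁿ`, and
`pⱼ²(1 - pⱼ)ⁿ ≤ pⱼ²(1 - pⱼ)ⁿ⁻² = 2 P(X_{n,j} = 2)/(n(n-1))`. Additivity of the variance holds for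
the partial sums, and passes to the series because the variance is lower semicontinuous
(Fatou) along a.e. convergent sequences whose means converge.
-/

open MeasureTheory ProbabilityTheory Filter Topology

namespace MeasureTheory

variable {α E : Type*} {_ : MeasurableSpace α} {μ : Measure α}
  [NormedAddCommGroup E] [CompleteSpace E]

theorem ae_summable_of_summable_integral_norm {ι : Type*} [Countable ι] {F : ι → α → E}
    (hF : ∀ i, Integrable (F i) μ) (hsum : Summable fun i => ∫ a, ‖F i a‖ ∂μ) :
    ∀ᵐ a ∂μ, Summable fun i => F i a := by
  have hfin : ∑' i, eLpNorm (F i) 1 μ ≠ ⊤ := by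
    simp_rw [eLpNorm_one_eq_lintegral_enorm, ← ofReal_integral_norm_eq_lintegral_enorm (hF _)]
    rw [← ENNReal.ofReal_tsum_of_nonneg (fun i => integral_nonneg fun a => norm_nonneg _) hsum]
    exact ENNReal.ofReal_ne_top
  filter_upwards [summable_norm_of_tsum_eLpNorm_ne_top le_rfl (fun i => (hF i).1) hfin]
    with a ha using ha.of_norm

end MeasureTheory

namespace ProbabilityTheory

variable {Ω : Type*} [MeasurableSpace Ω] {μ : Measure Ω}

theorem evariance_le_liminf_of_tendsto_ae {f : ℕ → Ω → ℝ} {g : Ω → ℝ}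
    (hf : ∀ N, AEMeasurable (f N) μ)
    (hlim : ∀ᵐ ω ∂μ, Tendsto (fun N => f N ω) atTop (𝓝 (g ω)))
    (hmean : Tendsto (fun N => μ[f N]) atTop (𝓝 μ[g])) :
    evariance g μ ≤ liminf (fun N => evariance (f N) μ) atTop := by
  have hlim' : ∀ᵐ ω ∂μ, Tendsto (fun N => ‖f N ω - μ[f N]‖ₑ ^ 2) atTop
      (𝓝 (‖g ω - μ[g]‖ₑ ^ 2)) := by
    filter_upwards [hlim] with ω hω
    exact (ENNReal.continuous_pow 2).continuousAt.tendsto.comp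
      (continuous_enorm.continuousAt.tendsto.comp (hω.sub hmean))
  calc evariance g μ = ∫⁻ ω, liminf (fun N => ‖f N ω - μ[f N]‖ₑ ^ 2) atTop ∂μ :=
        lintegral_congr_ae (hlim'.mono fun ω hω => hω.liminf_eq.symm)
    _ ≤ liminf (fun N => evariance (f N) μ) atTop :=
        lintegral_liminf_le' fun N => ((hf N).sub aemeasurable_const).enorm.pow_const 2

theorem variance_tsum_le_tsum_variance [IsFiniteMeasure μ] {Y : ℕ → Ω → ℝ}
    (hY : ∀ j, MemLp (Y j) 2 μ) (hindep : Pairwise fun i j => IndepFun (Y i) (Y j) μ)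
    (hint : Summable fun j => ∫ ω, ‖Y j ω‖ ∂μ) (hvar : Summable fun j => variance (Y j) μ) :
    variance (fun ω => ∑' j, Y j ω) μ ≤ ∑' j, variance (Y j) μ := by
  set S : ℕ → Ω → ℝ := fun N => ∑ j ∈ Finset.range N, Y j
  have hYint : ∀ j, Integrable (Y j) μ := fun j => (hY j).integrable one_le_two
  have hlim : ∀ᵐ ω ∂μ, Tendsto (fun N => S N ω) atTop (𝓝 (∑' j, Y j ω)) := by
    filter_upwards [ae_summable_of_summable_integral_norm hYint hint] with ω hω
    simpa [S, Finset.sum_apply] using hω.hasSum.tendsto_sum_nat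
  have hmean : Tendsto (fun N => μ[S N]) atTop (𝓝 μ[fun ω => ∑' j, Y j ω]) := by
    simp only [S, Finset.sum_apply, integral_finsetSum _ fun j _ => hYint j]
    exact (hasSum_integral_of_summable_integral_norm hYint hint).tendsto_sum_nat
  have hvarS : ∀ N, evariance (S N) μ ≤ ENNReal.ofReal (∑' j, variance (Y j) μ) := by
    intro N
    rw [← ofReal_variance (memLp_finsetSum' _ fun j _ => hY j),
      IndepFun.variance_sum (fun j _ => hY j) fun i _ j _ hij => hindep hij]
    exact ENNReal.ofReal_le_ofReal
      (hvar.sum_le_tsum _ fun j _ => variance_nonneg (Y j) μ)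
  have hevar := (evariance_le_liminf_of_tendsto_ae
      (fun N => (memLp_finsetSum' _ fun j _ => hY j).aemeasurable) hlim hmean).trans
    (liminf_le_of_frequently_le' (Frequently.of_forall hvarS))
  exact ENNReal.toReal_le_of_le_ofReal (tsum_nonneg fun j => variance_nonneg _ _) hevar

end ProbabilityTheory

section CountingVariables

variable {Ω α : Type*} [DecidableEq α]

theorem ite_eq_indicator (X : Ω → α) (a : α) (c : ℝ) :
    (fun ω => if X ω = a then c else 0) = {ω | X ω = a}.indicator fun _ => c := by
  ext ω
  simp only [Set.indicator_apply, Set.mem_ofPred_eq]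

variable [MeasurableSpace Ω] {μ : Measure Ω} [MeasurableSpace α] [MeasurableSingletonClass α]

theorem integrable_ite_eq [IsFiniteMeasure μ] {X : Ω → α} (hX : Measurable X) (a : α) (c : ℝ) :
    Integrable (fun ω => if X ω = a then c else 0) μ := by
  rw [ite_eq_indicator]
  exact (integrable_const c).indicator (hX (measurableSet_singleton a))

theorem integral_ite_eq {X : Ω → α} (hX : Measurable X) (a : α) (c : ℝ) :
    ∫ ω, (if X ω = a then c else 0) ∂μ = μ.real {ω | X ω = a} * c := by
  rw [ite_eq_indicator,
    integral_indicator_const (s := {ω | X ω = a}) c (hX (measurableSet_singleton a)), smul_eq_mul]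

theorem integral_norm_ite_eq_one {X : Ω → α} (hX : Measurable X) (a : α) :
    ∫ ω, ‖if X ω = a then (1 : ℝ) else 0‖ ∂μ = μ.real {ω | X ω = a} := by
  simp only [apply_ite norm, norm_one, norm_zero, integral_ite_eq hX, mul_one]

variable [IsFiniteMeasure μ] {X : ℕ → Ω → α}

theorem ae_summable_ite_eq (hX : ∀ j, Measurable (X j)) (a : α)
    (hsum : Summable fun j => μ.real {ω | X j ω = a}) :
    ∀ᵐ ω ∂μ, Summable fun j => if X j ω = a then (1 : ℝ) else 0 :=
  ae_summable_of_summable_integral_norm (fun j => integrable_ite_eq (hX j) a 1)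
    (by simpa only [integral_norm_ite_eq_one (hX _)] using hsum)

theorem integral_tsum_ite_eq (hX : ∀ j, Measurable (X j)) (a : α)
    (hsum : Summable fun j => μ.real {ω | X j ω = a}) :
    ∫ ω, (∑' j, if X j ω = a then (1 : ℝ) else 0) ∂μ = ∑' j, μ.real {ω | X j ω = a} := by
  rw [← integral_tsum_of_summable_integral_norm (fun j => integrable_ite_eq (hX j) a 1)
    (by simpa only [integral_norm_ite_eq_one (hX _)] using hsum)]
  simp only [integral_ite_eq (hX _), mul_one]

end CountingVariables

theorem choose_mul_pow_mul_one_sub_pow_le {p : ℝ} (hp₀ : 0 ≤ p) (hp₁ : p ≤ 1) {n k : ℕ}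
    (hk : 1 ≤ k) : (n.choose k : ℝ) * p ^ k * (1 - p) ^ (n - k) ≤ n.choose k * p := by
  calc (n.choose k : ℝ) * p ^ k * (1 - p) ^ (n - k) ≤ n.choose k * p ^ k * 1 := by
        gcongr
        exact pow_le_one₀ (by linarith) (by linarith)
    _ ≤ n.choose k * p := by
        rw [mul_one]
        gcongr
        exact pow_le_of_le_one hp₀ hp₁ (by omega)

theorem sq_mul_one_sub_pow_le {p : ℝ} (hp₀ : 0 ≤ p) (hp₁ : p ≤ 1) {n : ℕ} (hn : 2 ≤ n) :
    p ^ 2 * (1 - p) ^ n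
      ≤ 2 / (n * (n - 1)) * ((n.choose 2 : ℝ) * p ^ 2 * (1 - p) ^ (n - 2)) := by
  have hn' : (2 : ℝ) ≤ n := by exact_mod_cast hn
  have hsplit : (1 - p) ^ n = (1 - p) ^ (n - 2) * (1 - p) ^ 2 := by
    rw [← pow_add, Nat.sub_add_cancel hn]
  have hrhs : 2 / (n * (n - 1)) * ((n.choose 2 : ℝ) * p ^ 2 * (1 - p) ^ (n - 2))
      = p ^ 2 * (1 - p) ^ (n - 2) := by
    have : (n : ℝ) - 1 ≠ 0 := by linarith
    rw [Nat.cast_choose_two]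
    field_simp
  rw [hsplit, hrhs]
  have : (1 - p) ^ 2 ≤ 1 := pow_le_one₀ (by linarith) (by linarith)
  calc p ^ 2 * ((1 - p) ^ (n - 2) * (1 - p) ^ 2) ≤ p ^ 2 * ((1 - p) ^ (n - 2) * 1) := by
        gcongr
    _ = p ^ 2 * (1 - p) ^ (n - 2) := by rw [mul_one]

/-- The summand `Yⱼ` above, as a function of the count `k = X_{n,j}`. -/
noncomputable def goodTuringErrorTerm (n : ℕ) (p : ℝ) (k : ℕ) : ℝ :=
  (if k = 1 then 1 else 0) / n - if k = 0 then p else 0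

theorem goodTuringErrorTerm_sq (n : ℕ) (p : ℝ) (k : ℕ) :
    goodTuringErrorTerm n p k ^ 2
      = (if k = 1 then 1 / (n : ℝ) ^ 2 else 0) + if k = 0 then p ^ 2 else 0 := by
  unfold goodTuringErrorTerm
  split_ifs <;> first | omega | ring

theorem abs_goodTuringErrorTerm_le {p : ℝ} (hp : 0 ≤ p) (n k : ℕ) :
    |goodTuringErrorTerm n p k| ≤ (if k = 1 then 1 else 0) + p := by
  have : (1 : ℝ) / n ≤ 1 := by simpa only [one_div] using Nat.cast_inv_le_one n
  unfold goodTuringErrorTerm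
  split_ifs <;> first | omega | skip
  · rw [sub_zero, abs_of_nonneg (by positivity)]
    linarith
  · rw [zero_div, zero_sub, abs_neg, abs_of_nonneg hp, zero_add]
  · simpa using hp

def HasBinomialLaw {Ω : Type*} [MeasurableSpace Ω] (μ : Measure Ω) (X : Ω → ℕ) (n : ℕ) (p : ℝ) :
    Prop :=
  ∀ k, μ {ω | X ω = k} = ENNReal.ofReal ((n.choose k : ℝ) * p ^ k * (1 - p) ^ (n - k))

section GoodTuringErrorTerm

variable {Ω : Type*} [MeasurableSpace Ω] {μ : Measure Ω} {X : Ω → ℕ} {n : ℕ} {p : ℝ}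

theorem HasBinomialLaw.measureReal_eq (h : HasBinomialLaw μ X n p) (hp₀ : 0 ≤ p) (hp₁ : p ≤ 1)
    (k : ℕ) : μ.real {ω | X ω = k} = n.choose k * p ^ k * (1 - p) ^ (n - k) := by
  rw [measureReal_def, h k, ENNReal.toReal_ofReal]
  have : 0 ≤ 1 - p := by linarith
  positivity

theorem memLp_goodTuringErrorTerm [IsFiniteMeasure μ] (hX : Measurable X) (hp : 0 ≤ p) :
    MemLp (fun ω => goodTuringErrorTerm n p (X ω)) 2 μ := by
  refine MemLp.of_bound
    ((measurable_from_top (f := goodTuringErrorTerm n p)).comp hX).aestronglyMeasurable (1 + p)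
    (ae_of_all _ fun ω => (abs_goodTuringErrorTerm_le hp n (X ω)).trans ?_)
  split_ifs <;> linarith

theorem integral_norm_goodTuringErrorTerm_le [IsProbabilityMeasure μ] (hX : Measurable X)
    (hp : 0 ≤ p) : ∫ ω, ‖goodTuringErrorTerm n p (X ω)‖ ∂μ ≤ μ.real {ω | X ω = 1} + p := by
  calc ∫ ω, ‖goodTuringErrorTerm n p (X ω)‖ ∂μ
      ≤ ∫ ω, ((if X ω = 1 then 1 else 0) + p) ∂μ :=
        integral_mono ((memLp_goodTuringErrorTerm hX hp).integrable one_le_two).norm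
          ((integrable_ite_eq hX 1 1).add (integrable_const p))
          fun ω => abs_goodTuringErrorTerm_le hp n (X ω)
    _ = μ.real {ω | X ω = 1} + p := by
        rw [integral_add (integrable_ite_eq hX 1 1) (integrable_const p), integral_ite_eq hX,
          integral_const, probReal_univ, mul_one, one_smul]

theorem integral_goodTuringErrorTerm_sq [IsFiniteMeasure μ] (hX : Measurable X) :
    ∫ ω, goodTuringErrorTerm n p (X ω) ^ 2 ∂μ
      = μ.real {ω | X ω = 1} * (1 / (n : ℝ) ^ 2) + μ.real {ω | X ω = 0} * p ^ 2 := by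
  simp only [goodTuringErrorTerm_sq]
  rw [integral_add (integrable_ite_eq hX 1 _) (integrable_ite_eq hX 0 _), integral_ite_eq hX,
    integral_ite_eq hX]

theorem variance_goodTuringErrorTerm_le [IsProbabilityMeasure μ] (hX : Measurable X)
    (hbin : HasBinomialLaw μ X n p) (hp₀ : 0 ≤ p) (hp₁ : p ≤ 1) (hn : 2 ≤ n) :
    variance (fun ω => goodTuringErrorTerm n p (X ω)) μ
      ≤ 1 / (n : ℝ) ^ 2 * μ.real {ω | X ω = 1} + 2 / (n * (n - 1)) * μ.real {ω | X ω = 2} := by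
  calc variance (fun ω => goodTuringErrorTerm n p (X ω)) μ
      ≤ ∫ ω, goodTuringErrorTerm n p (X ω) ^ 2 ∂μ :=
        variance_le_expectation_sq (X := fun ω => goodTuringErrorTerm n p (X ω))
          ((measurable_from_top (f := goodTuringErrorTerm n p)).comp hX).aestronglyMeasurable
    _ = 1 / (n : ℝ) ^ 2 * μ.real {ω | X ω = 1} + p ^ 2 * (1 - p) ^ n := by
        rw [integral_goodTuringErrorTerm_sq hX, hbin.measureReal_eq hp₀ hp₁ 0]
        simp only [Nat.choose_zero_right, Nat.cast_one, pow_zero, Nat.sub_zero]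
        ring
    _ ≤ _ := by
        rw [hbin.measureReal_eq hp₀ hp₁ 2]
        exact add_le_add_right (sq_mul_one_sub_pow_le hp₀ hp₁ hn) _

end GoodTuringErrorTerm

section BernoulliProduct

variable {Ω : Type*} [MeasurableSpace Ω] {μ : Measure Ω} {X : ℕ → Ω → ℕ} {n : ℕ} {p : ℕ → ℝ}

theorem summable_measureReal_eq_of_hasBinomialLaw (hbin : ∀ j, HasBinomialLaw μ (X j) n (p j))
    (hp₀ : ∀ j, 0 ≤ p j) (hp₁ : ∀ j, p j ≤ 1) (hsum : Summable p) {k : ℕ} (hk : 1 ≤ k) :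
    Summable fun j => μ.real {ω | X j ω = k} :=
  Summable.of_nonneg_of_le (fun _ => measureReal_nonneg)
    (fun j => ((hbin j).measureReal_eq (hp₀ j) (hp₁ j) k).trans_le
      (choose_mul_pow_mul_one_sub_pow_le (hp₀ j) (hp₁ j) hk))
    (hsum.mul_left (n.choose k : ℝ))

theorem ae_eq_tsum_goodTuringErrorTerm [IsFiniteMeasure μ] (hX : ∀ j, Measurable (X j))
    (hp₀ : ∀ j, 0 ≤ p j) (hsum : Summable p)
    (hsum₁ : Summable fun j => μ.real {ω | X j ω = 1}) :
    (fun ω => (∑' j, if X j ω = 1 then (1 : ℝ) else 0) / n - ∑' j, if X j ω = 0 then p j else 0)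
      =ᵐ[μ] fun ω => ∑' j, goodTuringErrorTerm n (p j) (X j ω) := by
  filter_upwards [ae_summable_ite_eq hX 1 hsum₁] with ω hK
  have hM : Summable fun j => if X j ω = 0 then p j else 0 :=
    .of_nonneg_of_le (fun j => by split_ifs <;> simp [hp₀ j])
      (fun j => by split_ifs <;> simp [hp₀ j]) hsum
  rw [← tsum_div_const, ← (hK.div_const _).tsum_sub hM]
  rfl

theorem variance_tsum_goodTuringErrorTerm_le [IsProbabilityMeasure μ]
    (hX : ∀ j, Measurable (X j)) (hindep : iIndepFun X μ)
    (hbin : ∀ j, HasBinomialLaw μ (X j) n (p j)) (hp₀ : ∀ j, 0 ≤ p j) (hp₁ : ∀ j, p j ≤ 1)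
    (hsum : Summable p) (hn : 2 ≤ n) :
    variance (fun ω => ∑' j, goodTuringErrorTerm n (p j) (X j ω)) μ
      ≤ ∑' j, (1 / (n : ℝ) ^ 2 * μ.real {ω | X j ω = 1}
        + 2 / (n * (n - 1)) * μ.real {ω | X j ω = 2}) := by
  have hq {k : ℕ} (hk : 1 ≤ k) : Summable fun j => μ.real {ω | X j ω = k} :=
    summable_measureReal_eq_of_hasBinomialLaw hbin hp₀ hp₁ hsum hk
  have hvar j := variance_goodTuringErrorTerm_le (hX j) (hbin j) (hp₀ j) (hp₁ j) hn
  have hbound : Summable fun j => 1 / (n : ℝ) ^ 2 * μ.real {ω | X j ω = 1}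
      + 2 / (n * (n - 1)) * μ.real {ω | X j ω = 2} :=
    ((hq le_rfl).mul_left _).add ((hq one_le_two).mul_left _)
  have hint : Summable fun j => ∫ ω, ‖goodTuringErrorTerm n (p j) (X j ω)‖ ∂μ :=
    .of_nonneg_of_le (fun j => integral_nonneg fun ω => norm_nonneg _)
      (fun j => integral_norm_goodTuringErrorTerm_le (hX j) (hp₀ j)) ((hq le_rfl).add hsum)
  have hvarsum : Summable fun j => variance (fun ω => goodTuringErrorTerm n (p j) (X j ω)) μ :=
    .of_nonneg_of_le (fun j => variance_nonneg _ _) hvar hbound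
  exact (variance_tsum_le_tsum_variance (fun j => memLp_goodTuringErrorTerm (hX j) (hp₀ j))
    (fun i j hij => (hindep.indepFun hij).comp (φ := goodTuringErrorTerm n (p i))
      (ψ := goodTuringErrorTerm n (p j)) measurable_from_top measurable_from_top)
    hint hvarsum).trans (hvarsum.tsum_le_tsum hvar hbound)

end BernoulliProduct

theorem stmt
    {Ω : Type*} [MeasurableSpace Ω] (μ : Measure Ω) [IsProbabilityMeasure μ]
    (p : ℕ → ℝ) (hp : ∀ j, p j ∈ Set.Ioo (0 : ℝ) 1) (hsum : Summable p)
    (n : ℕ) (X : ℕ → Ω → ℕ)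
    (hmeas : ∀ j, Measurable (X j))
    (hindep : iIndepFun X μ)
    (hbin : ∀ j k, μ {ω | X j ω = k} =
      ENNReal.ofReal ((n.choose k : ℝ) * p j ^ k * (1 - p j) ^ (n - k)))
    (hn : 2 ≤ n) :
    variance (fun ω => (∑' j, if X j ω = 1 then (1 : ℝ) else 0) / n
        - ∑' j, if X j ω = 0 then p j else 0) μ
      ≤ (1 / n ^ 2) * (∫ ω, (∑' j, if X j ω = 1 then (1 : ℝ) else 0) ∂μ)
        + (2 / (n * (n - 1))) *
            ∫ ω, (∑' j, if X j ω = 2 then (1 : ℝ) else 0) ∂μ := by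
  have hp₀ j : 0 ≤ p j := (hp j).1.le
  have hp₁ j : p j ≤ 1 := (hp j).2.le
  have hq {k : ℕ} (hk : 1 ≤ k) : Summable fun j => μ.real {ω | X j ω = k} :=
    summable_measureReal_eq_of_hasBinomialLaw hbin hp₀ hp₁ hsum hk
  rw [variance_congr (ae_eq_tsum_goodTuringErrorTerm hmeas hp₀ hsum (hq le_rfl)),
    integral_tsum_ite_eq hmeas 1 (hq le_rfl), integral_tsum_ite_eq hmeas 2 (hq one_le_two),
    ← tsum_mul_left, ← tsum_mul_left,
    ← ((hq le_rfl).mul_left _).tsum_add ((hq one_le_two).mul_left _)]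
  exact variance_tsum_goodTuringErrorTerm_le hmeas hindep hbin hp₀ hp₁ hsum hn
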